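/- Let c ∈ ℂ with |c| ≤ 2. For every z ∈ ℂ, the orbit (f_c^n(z))ₙ is bounded if and only if |f_c^n(z)| ≤ 2 for all n ∈ ℕ. -/

import Mathlib

/-!
Once an iterate leaves the closed disc of radius 2, the excess `‖w‖ - 2` at least quadruples
at each further step, since `‖w² + c‖ - 2 ≥ ‖w‖² - 4 = (‖w‖ - 2)(‖w‖ + 2)` when `‖c‖ ≤ 2`.
So the orbit tends to infinity, and a bounded orbit never leaves the disc.
-/

open Filter

/-- The quadratic map with seed `c`. -/
noncomputable def fc (c : ℂ) : ℂ → ℂ := fun z => z ^ 2 + c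

lemma norm_sq_sub_norm_le_norm_fc (c z : ℂ) : ‖z‖ ^ 2 - ‖c‖ ≤ ‖fc c z‖ := by
  have h := norm_sub_norm_le (z ^ 2) (-c)
  rwa [norm_neg, norm_pow, sub_neg_eq_add] at h

lemma four_mul_sub_two_le_norm_fc_sub_two {c z : ℂ} (hc : ‖c‖ ≤ 2) (hz : 2 ≤ ‖z‖) :
    4 * (‖z‖ - 2) ≤ ‖fc c z‖ - 2 := by
  nlinarith [norm_sq_sub_norm_le_norm_fc c z]

lemma four_pow_mul_sub_two_le_norm_iterate_fc_sub_two {c z : ℂ} (hc : ‖c‖ ≤ 2)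
    (hz : 2 ≤ ‖z‖) (k : ℕ) : 4 ^ k * (‖z‖ - 2) ≤ ‖(fc c)^[k] z‖ - 2 := by
  induction k with
  | zero => simp
  | succ k ih =>
    have h2 : 2 ≤ ‖(fc c)^[k] z‖ := by
      have : 0 ≤ 4 ^ k * (‖z‖ - 2) := by positivity
      linarith
    calc 4 ^ (k + 1) * (‖z‖ - 2) = 4 * (4 ^ k * (‖z‖ - 2)) := by ring
      _ ≤ 4 * (‖(fc c)^[k] z‖ - 2) := by gcongr
      _ ≤ ‖(fc c)^[k + 1] z‖ - 2 := by
        rw [Function.iterate_succ_apply']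
        exact four_mul_sub_two_le_norm_fc_sub_two hc h2

lemma tendsto_norm_iterate_fc_atTop {c z : ℂ} (hc : ‖c‖ ≤ 2) (hz : 2 < ‖z‖) :
    Tendsto (fun k => ‖(fc c)^[k] z‖) atTop atTop := by
  have h4 : Tendsto (fun k : ℕ => 4 ^ k * (‖z‖ - 2) + 2) atTop atTop :=
    tendsto_atTop_add_const_right _ _
      ((tendsto_pow_atTop_atTop_of_one_lt (by norm_num)).atTop_mul_const (by linarith))
  refine tendsto_atTop_mono (fun k => ?_) h4
  linarith [four_pow_mul_sub_two_le_norm_iterate_fc_sub_two hc hz.le k]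

/-- Correctness of the bailout test with escape radius 2: for `|c| ≤ 2`,
the orbit of `z` under `f_c` is bounded iff every iterate has modulus `≤ 2`. -/
theorem orbit_bounded_iff_le_two (c : ℂ) (hc : ‖c‖ ≤ 2) (z : ℂ) :
    (∃ M : ℝ, ∀ n : ℕ, ‖(fc c)^[n] z‖ ≤ M) ↔
    (∀ n : ℕ, ‖(fc c)^[n] z‖ ≤ 2) := by
  refine ⟨fun ⟨M, hM⟩ n => ?_, fun h => ⟨2, h⟩⟩
  by_contra! hn
  apply not_bddAbove_of_tendsto_atTop (tendsto_norm_iterate_fc_atTop hc hn)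
  refine ⟨M, ?_⟩
  rintro _ ⟨k, rfl⟩
  simpa only [← Function.iterate_add_apply] using hM (k + n)
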